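/- Let μ be a finite positive Borel measure on ℝ whose Borel transform F(z) = ∫ (t − z)⁻¹ dμ(t) satisfies sup{ |F(λ + iε)| : λ ∈ [a,b], 0 < ε < 1 } < ∞. Then μ has no singular continuous part on (a,b). -/

import Mathlib

open MeasureTheory Complex Set

/-!
The imaginary part of the Borel transform is the Poisson integral
`Im F(λ + iε) = ∫ ε / ((t - λ)² + ε²) dμ(t)`, whose kernel is at least `1 / (2ε)` on
`[λ - ε, λ + ε]`. Hence `μ [λ - ε, λ + ε] ≤ 2ε |F(λ + iε)| ≤ C · |[λ - ε, λ + ε]|` for small `ε`,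
and the Besicovitch covering theorem turns this density bound at every point of a set `B ⊆ (a, b)`
into `μ B ≤ C · |B|`. So `μ` vanishes on the Lebesgue-null subsets of `(a, b)`, atoms or not.
-/

open Metric Filter Topology

/-- A measure has no singular continuous part on `s` if every Lebesgue-null subset of `s`,
with the atoms removed, has measure zero. -/
def NoSingularContinuousOn (μ : Measure ℝ) (s : Set ℝ) : Prop :=
  ∀ B : Set ℝ, B ⊆ s → MeasurableSet B → volume B = 0 →
    μ (B \ {x : ℝ | μ {x} ≠ 0}) = 0

theorem measure_le_of_forall_eventually_closedBall_le {α : Type*} [MetricSpace α]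
    [MeasurableSpace α] [BorelSpace α] [SecondCountableTopology α] [HasBesicovitchCovering α]
    (μ ν : Measure α) [SFinite μ] [IsLocallyFiniteMeasure ν] {s : Set α}
    (h : ∀ x ∈ s, ∀ᶠ r in 𝓝[>] 0, μ (closedBall x r) ≤ ν (closedBall x r)) : μ s ≤ ν s :=
  (Besicovitch.vitaliFamily μ).measure_le_of_frequently_le ν .rfl s fun x hx ↦
    (Besicovitch.tendsto_filterAt μ x).frequently (h x hx).frequently

noncomputable def borelTransform (μ : Measure ℝ) (z : ℂ) : ℂ :=
  ∫ t : ℝ, ((t : ℂ) - z)⁻¹ ∂μ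

theorem im_inv_ofReal_sub (t : ℝ) (z : ℂ) :
    ((t : ℂ) - z)⁻¹.im = z.im / ((t - z.re) ^ 2 + z.im ^ 2) := by
  rw [inv_im, normSq_apply]
  simp only [sub_re, sub_im, ofReal_re, ofReal_im]
  ring

theorem norm_inv_ofReal_sub_le (t : ℝ) {z : ℂ} (hz : z.im ≠ 0) :
    ‖((t : ℂ) - z)⁻¹‖ ≤ |z.im|⁻¹ := by
  rw [norm_inv]
  refine inv_anti₀ (abs_pos.2 hz) ?_
  calc |z.im| = |((t : ℂ) - z).im| := by simp
    _ ≤ ‖(t : ℂ) - z‖ := abs_im_le_norm _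

theorem integrable_inv_ofReal_sub (μ : Measure ℝ) [IsFiniteMeasure μ] {z : ℂ} (hz : z.im ≠ 0) :
    Integrable (fun t : ℝ ↦ ((t : ℂ) - z)⁻¹) μ := by
  have hne : ∀ t : ℝ, (t : ℂ) - z ≠ 0 := fun t h ↦ hz (by simpa using congrArg im h)
  refine (integrable_const |z.im|⁻¹).mono' ?_ (.of_forall (norm_inv_ofReal_sub_le · hz))
  exact ((continuous_ofReal.sub continuous_const).inv₀ hne).aestronglyMeasurable

theorem borelTransform_im (μ : Measure ℝ) [IsFiniteMeasure μ] {z : ℂ} (hz : z.im ≠ 0) :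
    (borelTransform μ z).im = ∫ t, z.im / ((t - z.re) ^ 2 + z.im ^ 2) ∂μ := by
  simp only [← im_inv_ofReal_sub]
  exact (integral_im (integrable_inv_ofReal_sub μ hz)).symm

theorem inv_two_mul_le_poissonKernel {lam ε t : ℝ} (hε : 0 < ε) (ht : t ∈ closedBall lam ε) :
    (2 * ε)⁻¹ ≤ ε / ((t - lam) ^ 2 + ε ^ 2) := by
  have hsq : (t - lam) ^ 2 ≤ ε ^ 2 := sq_le_sq' (abs_le.1 ht).1 (abs_le.1 ht).2
  rw [inv_eq_one_div, div_le_div_iff₀ (by positivity) (by positivity)]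
  nlinarith

theorem measureReal_closedBall_le_borelTransform_im (μ : Measure ℝ) [IsFiniteMeasure μ]
    {lam ε : ℝ} (hε : 0 < ε) :
    μ.real (closedBall lam ε) ≤ 2 * ε * (borelTransform μ (lam + ε * I)).im := by
  set P : ℝ → ℝ := fun t ↦ ε / ((t - lam) ^ 2 + ε ^ 2)
  have hre : (lam + ε * I : ℂ).re = lam := by simp
  have him : (lam + ε * I : ℂ).im = ε := by simp
  have hz : (lam + ε * I : ℂ).im ≠ 0 := by rw [him]; exact hε.ne'
  have hF : (borelTransform μ (lam + ε * I)).im = ∫ t, P t ∂μ := by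
    simpa only [hre, him] using borelTransform_im μ hz
  have hP : Integrable P μ := by
    simpa only [RCLike.im_to_complex, im_inv_ofReal_sub, hre, him]
      using (integrable_inv_ofReal_sub μ hz).im
  have hball : (2 * ε)⁻¹ * μ.real (closedBall lam ε) ≤ ∫ t in closedBall lam ε, P t ∂μ :=
    setIntegral_ge_of_const_le_real measurableSet_closedBall (measure_ne_top μ _)
      (fun _ ht ↦ inv_two_mul_le_poissonKernel hε ht) hP.integrableOn
  have hwhole : ∫ t in closedBall lam ε, P t ∂μ ≤ ∫ t, P t ∂μ :=
    setIntegral_le_integral hP (.of_forall fun t ↦ by positivity)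
  rw [hF, ← inv_mul_le_iff₀ (by positivity)]
  exact hball.trans hwhole

theorem measure_closedBall_le_nnnorm_borelTransform_mul_volume (μ : Measure ℝ)
    [IsFiniteMeasure μ] {lam ε : ℝ} (hε : 0 < ε) :
    μ (closedBall lam ε) ≤ ‖borelTransform μ (lam + ε * I)‖₊ * volume (closedBall lam ε) := by
  rw [Real.volume_closedBall, ← ENNReal.ofReal_coe_nnreal, ← ENNReal.ofReal_mul (by positivity),
    ← ofReal_measureReal (measure_ne_top μ _)]
  refine ENNReal.ofReal_le_ofReal ((measureReal_closedBall_le_borelTransform_im μ hε).trans ?_)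
  rw [mul_comm, coe_nnnorm]
  gcongr
  exact (le_abs_self _).trans (abs_im_le_norm _)

/-- If `μ` is a finite positive Borel measure on `ℝ` whose Borel transform
`F(z) = ∫ (t − z)⁻¹ dμ(t)` is uniformly bounded on `{λ + iε : λ ∈ [a,b], 0 < ε < 1}`, then
`μ` has no singular continuous part on `(a,b)`. -/
theorem measure_no_sc_of_bounded_borel_transform
    (μ : Measure ℝ) [IsFiniteMeasure μ] (a b : ℝ)
    (hbdd : ∃ C : ℝ, ∀ lam ∈ Icc a b, ∀ ε ∈ Ioo (0 : ℝ) 1,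
      ‖∫ t : ℝ, ((t : ℂ) - ((lam : ℂ) + (ε : ℂ) * Complex.I))⁻¹ ∂μ‖ ≤ C) :
    NoSingularContinuousOn μ (Ioo a b) := by
  intro B hBab _ hB
  obtain ⟨C, hC⟩ := hbdd
  have hdensity : ∀ x ∈ B, ∀ᶠ r in 𝓝[>] 0,
      μ (closedBall x r) ≤ (C.toNNReal • volume : Measure ℝ) (closedBall x r) := by
    intro x hx
    filter_upwards [Ioo_mem_nhdsGT one_pos] with r hr
    have hFC : ‖borelTransform μ (x + r * I)‖₊ ≤ C.toNNReal :=
      NNReal.le_toNNReal_of_coe_le <| hC x (Ioo_subset_Icc_self (hBab hx)) r hr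
    calc μ (closedBall x r) ≤ ‖borelTransform μ (x + r * I)‖₊ * volume (closedBall x r) :=
          measure_closedBall_le_nnnorm_borelTransform_mul_volume μ hr.1
      _ ≤ (C.toNNReal • volume : Measure ℝ) (closedBall x r) := by
          rw [Measure.smul_apply, ENNReal.smul_def, smul_eq_mul]
          gcongr
  refine measure_mono_null sdiff_subset (nonpos_iff_eq_zero.1 ?_)
  calc μ B ≤ (C.toNNReal • volume : Measure ℝ) B :=
        measure_le_of_forall_eventually_closedBall_le _ _ hdensity
    _ = 0 := by rw [Measure.smul_apply, hB, smul_zero]
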